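/- Let J be a nonempty finite index set, and for each j ∈ J let O_j be a nonempty finite set of options and π_j : O_j → ℝ a probability vector (π_j(k) ≥ 0 for all k and ∑_{k ∈ O_j} π_j(k) = 1). A configuration is z ∈ Π_{j ∈ J} O_j with probability p(z) = ∏_{j ∈ J} π_j(z_j). Let ℰ : (Π_{j ∈ J} O_j) → ℝ and e* ∈ ℝ. Assume: (a) ∑_z p(z) · |ℰ(z) − e*| = 0; and (b) no decision has two options with the same cost, i.e., for any two configurations z, z′ and any j ∈ J with z_j ≠ z′_j and z_k = z′_k for all k ≠ j, one has ℰ(z) ≠ ℰ(z′). Then each π_j is one-hot: for every j ∈ J there exists k ∈ O_j with π_j(k) = 1 and π_j(k′) = 0 for all k′ ≠ k. -/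

import Mathlib

/-!
A configuration of positive probability must have cost exactly `e*`, since it contributes a
positive multiple of `|ℰ(z) − e*|` to a vanishing sum of nonnegative terms. Fix a configuration
`z₀` whose every coordinate has positive probability. If some decision `j` had two options of
positive probability, changing `z₀` at `j` to either of them would give two configurations of
positive probability, hence both of cost `e*`, differing only at `j`: impossible. So every `π j`
has a single option of positive probability, which then carries all the mass.
-/

open Finset

section ProbabilityVector

variable {ι : Type*} [Fintype ι] {w : ι → ℝ}

lemma exists_pos_of_sum_eq_one (hw : ∀ i, 0 ≤ w i) (hsum : ∑ i, w i = 1) : ∃ i, 0 < w i := by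
  obtain ⟨i, -, hi⟩ := exists_ne_zero_of_sum_ne_zero (hsum.trans_ne one_ne_zero)
  exact ⟨i, (hw i).lt_of_ne' hi⟩

lemma exists_eq_one_of_subsingleton_pos (hw : ∀ i, 0 ≤ w i) (hsum : ∑ i, w i = 1)
    (huniq : ∀ i i', 0 < w i → 0 < w i' → i = i') :
    ∃ i, w i = 1 ∧ ∀ i', i' ≠ i → w i' = 0 := by
  obtain ⟨i, hi⟩ := exists_pos_of_sum_eq_one hw hsum
  have hzero : ∀ i', i' ≠ i → w i' = 0 := fun i' hne =>
    (hw i').eq_of_not_lt' fun hpos => hne (huniq i' i hpos hi)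
  refine ⟨i, ?_, hzero⟩
  rwa [Fintype.sum_eq_single i hzero] at hsum

lemma eq_of_sum_mul_abs_sub_eq_zero (hw : ∀ i, 0 ≤ w i) {f : ι → ℝ} {c : ℝ}
    (h : ∑ i, w i * |f i - c| = 0) {i : ι} (hi : 0 < w i) : f i = c := by
  have hterm := (Fintype.sum_eq_zero_iff_of_nonneg fun i => mul_nonneg (hw i) (abs_nonneg _)).mp
    h
  have := congr_fun hterm i
  simp only [Pi.zero_apply, mul_eq_zero, hi.ne', abs_eq_zero, sub_eq_zero, false_or] at this
  exact this

end ProbabilityVector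

theorem stmt_3_general {J : Type*} [Fintype J] [DecidableEq J]
    {O : J → Type*} [∀ j, Fintype (O j)]
    (π : ∀ j, O j → ℝ)
    (hnn : ∀ j, ∀ k : O j, 0 ≤ π j k)
    (hsum : ∀ j, ∑ k : O j, π j k = 1)
    (E : (∀ j, O j) → ℝ) (estar : ℝ)
    (h : ∑ z : ∀ j, O j, (∏ j, π j (z j)) * |E z - estar| = 0)
    (hdistinct : ∀ (z z' : ∀ j, O j) (j : J),
      z j ≠ z' j → (∀ k, k ≠ j → z k = z' k) → E z ≠ E z') :
    ∀ j : J, ∃ k : O j, π j k = 1 ∧ ∀ k' : O j, k' ≠ k → π j k' = 0 := by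
  have hcost : ∀ z : ∀ j, O j, (∀ j, 0 < π j (z j)) → E z = estar := fun z hz =>
    eq_of_sum_mul_abs_sub_eq_zero (fun z => prod_nonneg fun j _ => hnn j (z j)) h
      (prod_pos fun j _ => hz j)
  choose z₀ hz₀ using fun j => exists_pos_of_sum_eq_one (hnn j) (hsum j)
  have hcost_update : ∀ j (k : O j), 0 < π j k → E (Function.update z₀ j k) = estar :=
    fun j k hk => hcost _ <| (Function.forall_update_iff z₀ fun i x => 0 < π i x).mpr
      ⟨hk, fun i _ => hz₀ i⟩
  intro j
  refine exists_eq_one_of_subsingleton_pos (hnn j) (hsum j) fun k k' hk hk' => ?_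
  by_contra hne
  refine hdistinct (Function.update z₀ j k) (Function.update z₀ j k') j ?_ ?_
    ((hcost_update j k hk).trans (hcost_update j k' hk').symm)
  · simpa only [Function.update_self] using hne
  · intro i hi
    simp only [Function.update_of_ne hi]

/-- **Lemma 2 (UDC).** If the regularizer `E[|ℰ(z) − e*|]` vanishes and no decision
has two options with the same cost (changing a single coordinate always changes the
total cost), then every decision distribution `π j` is one-hot. -/
theorem stmt_3 {J : Type*} [Fintype J] [DecidableEq J] [Nonempty J]
    {O : J → Type*} [∀ j, Fintype (O j)] [∀ j, Nonempty (O j)]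
    (π : ∀ j, O j → ℝ)
    (hnn : ∀ j, ∀ k : O j, 0 ≤ π j k)
    (hsum : ∀ j, ∑ k : O j, π j k = 1)
    (E : (∀ j, O j) → ℝ) (estar : ℝ)
    (h : ∑ z : ∀ j, O j, (∏ j, π j (z j)) * |E z - estar| = 0)
    (hdistinct : ∀ (z z' : ∀ j, O j) (j : J),
      z j ≠ z' j → (∀ k, k ≠ j → z k = z' k) → E z ≠ E z') :
    ∀ j : J, ∃ k : O j, π j k = 1 ∧ ∀ k' : O j, k' ≠ k → π j k' = 0 :=
  stmt_3_general π hnn hsum E estar h hdistinct
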